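/- Let Ω ⊆ ℝⁿ be a bounded smooth domain with Poincaré constant κ (i.e. ‖v‖_{L²} ≤ κ‖∇v‖_{L²} for all v ∈ H¹₀(Ω)). Let u_{i-1}, u_i, u_{i+1} ∈ C²(Ω̄) vanish on ∂Ω and suppose Δ(u_{i+1} − u_i) = g on Ω where |g(x)| ≤ L |∇u_i(x) − ∇u_{i-1}(x)| pointwise for some constant L ≥ 0. Then ‖∇(u_{i+1} − u_i)‖_{L²} ≤ L κ ‖∇(u_i − u_{i-1})‖_{L²}. -/

import Mathlib

/-!
With `w = u_{i+1} - u_i`, Green's identity `∫_Ω |∇w|² = -∫_Ω w Δw` holds because `w`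
vanishes on `∂Ω`. It reduces to `∫_Ω ∂_v φ = 0` for `C¹` functions `φ` vanishing on `∂Ω`:
in coordinates where `v` is the last basis vector, Fubini slices `Ω` into bounded open
subsets of lines, each a countable disjoint union of open intervals whose endpoints lie on
`∂Ω`, so the fundamental theorem of calculus makes every piece vanish. Then
`‖∇w‖² ≤ ∫ |w| |Δw| ≤ L ‖w‖ ‖∇(u_i - u_{i-1})‖ ≤ L κ ‖∇w‖ ‖∇(u_i - u_{i-1})‖`
by the pointwise bound, Cauchy–Schwarz and Poincaré, and one divides by `‖∇w‖`.
-/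

open MeasureTheory Set Bornology

section Order

variable {α : Type*} [ConditionallyCompleteLinearOrder α] [TopologicalSpace α] [OrderTopology α]
  [DenselyOrdered α]

theorem IsOpen.csInf_notMem [NoMinOrder α] {s : Set α} (hs : IsOpen s) (hb : BddBelow s) :
    sInf s ∉ s := fun hmem => by
  obtain ⟨l, hl, hsub⟩ := exists_Ioc_subset_of_mem_nhds (hs.mem_nhds hmem) (exists_lt _)
  obtain ⟨m, hlm, hm⟩ := exists_between hl
  exact (csInf_le hb (hsub ⟨hlm, hm.le⟩)).not_gt hm

theorem IsOpen.csSup_notMem [NoMaxOrder α] {s : Set α} (hs : IsOpen s) (hb : BddAbove s) :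
    sSup s ∉ s :=
  IsOpen.csInf_notMem (α := αᵒᵈ) hs hb

theorem IsOpen.eq_Ioo_csInf_csSup [NoMinOrder α] [NoMaxOrder α] {s : Set α} (hs : IsOpen s)
    (hb : BddBelow s) (ha : BddAbove s) (hc : IsConnected s) : s = Ioo (sInf s) (sSup s) :=
  Subset.antisymm
    (fun _ hx => ⟨(csInf_le hb hx).lt_of_ne fun h => hs.csInf_notMem hb (h ▸ hx),
      (le_csSup ha hx).lt_of_ne fun h => hs.csSup_notMem ha (h ▸ hx)⟩)
    (hc.Ioo_csInf_csSup_subset hb ha)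

end Order

theorem IsOpen.frontier_connectedComponentIn_subset {X : Type*} [TopologicalSpace X]
    [LocallyConnectedSpace X] {U : Set X} (hU : IsOpen U) (x : X) :
    frontier (connectedComponentIn U x) ⊆ frontier U := by
  intro y hy
  refine ⟨closure_mono (connectedComponentIn_subset U x) hy.1, fun hyint => hy.2 ?_⟩
  rw [hU.connectedComponentIn.interior_eq]
  obtain ⟨z, hzy, hzx⟩ := mem_closure_iff.1 hy.1 _ hU.connectedComponentIn
    (mem_connectedComponentIn (hU.interior_eq ▸ hyint))
  rw [connectedComponentIn_eq hzx, ← connectedComponentIn_eq hzy]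
  exact mem_connectedComponentIn (hU.interior_eq ▸ hyint)

theorem IsOpen.setIntegral_eq_zero_of_forall_connectedComponentIn {X E : Type*}
    [TopologicalSpace X] [LocallyConnectedSpace X] [TopologicalSpace.SeparableSpace X]
    [MeasurableSpace X] [OpensMeasurableSpace X] [NormedAddCommGroup E] [NormedSpace ℝ E]
    {μ : Measure X} {U : Set X} (hU : IsOpen U) {f : X → E} (hf : IntegrableOn f U μ)
    (h : ∀ x ∈ U, ∫ y in connectedComponentIn U x, f y ∂μ = 0) : ∫ x in U, f x ∂μ = 0 := by
  set S := connectedComponentIn U '' U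
  have hdisj : S.PairwiseDisjoint id := by
    rintro _ ⟨x, -, rfl⟩ _ ⟨y, -, rfl⟩ hxy
    refine disjoint_left.2 fun z hzx hzy => hxy ?_
    rw [connectedComponentIn_eq hzx, connectedComponentIn_eq hzy]
  have hcount : S.Countable := hdisj.countable_of_isOpen
    (by rintro _ ⟨x, -, rfl⟩; exact hU.connectedComponentIn)
    (by rintro _ ⟨x, hx, rfl⟩; exact ⟨x, mem_connectedComponentIn hx⟩)
  have hUS : U = ⋃ c : S, (c : Set X) :=
    Subset.antisymm (fun y hy => mem_iUnion.2 ⟨⟨_, y, hy, rfl⟩, mem_connectedComponentIn hy⟩)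
      (iUnion_subset fun ⟨_, x, _, hc⟩ => hc ▸ connectedComponentIn_subset U x)
  have := hcount.to_subtype
  rw [hUS, integral_iUnion (s := fun c : S => (c : Set X)) (fun c => ?_)
    (fun c d hcd => hdisj c.2 d.2 (Subtype.coe_injective.ne hcd)) (hUS ▸ hf)]
  · exact (tsum_congr fun ⟨_, x, hx, hc⟩ => hc ▸ h x hx).trans tsum_zero
  · obtain ⟨_, x, -, rfl⟩ := c
    exact hU.connectedComponentIn.measurableSet

theorem Continuous.integrableOn_of_isBounded {X E : Type*} [PseudoMetricSpace X] [ProperSpace X]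
    [MeasurableSpace X] [OpensMeasurableSpace X] {μ : Measure X} [IsFiniteMeasureOnCompacts μ]
    [NormedAddCommGroup E] {f : X → E} (hf : Continuous f) {s : Set X} (hs : IsBounded s) :
    IntegrableOn f s μ :=
  (hf.continuousOn.integrableOn_compact' hs.isCompact_closure
    isClosed_closure.measurableSet).mono_set subset_closure

theorem setIntegral_deriv_eq_zero_of_eqOn_frontier {E : Type*} [NormedAddCommGroup E]
    [NormedSpace ℝ E] [CompleteSpace E] {U : Set ℝ} (hU : IsOpen U) (hUb : IsBounded U)
    {h : ℝ → E} (hh : ContDiff ℝ 1 h) (hfr : ∀ x ∈ frontier U, h x = 0) :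
    ∫ t in U, deriv h t = 0 := by
  have hcont : Continuous (deriv h) := hh.continuous_deriv le_rfl
  refine hU.setIntegral_eq_zero_of_forall_connectedComponentIn
    (hcont.integrableOn_of_isBounded hUb) fun x hx => ?_
  set c := connectedComponentIn U x
  have hcb : IsBounded c := hUb.subset (connectedComponentIn_subset U x)
  have hc : c = Ioo (sInf c) (sSup c) := hU.connectedComponentIn.eq_Ioo_csInf_csSup
    hcb.bddBelow hcb.bddAbove (isConnected_connectedComponentIn_iff.2 hx)
  have hlt : sInf c < sSup c := nonempty_Ioo.1 (hc ▸ ⟨x, mem_connectedComponentIn hx⟩)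
  have hends : {sInf c, sSup c} ⊆ frontier U := by
    rw [← frontier_Ioo hlt, ← hc]; exact hU.frontier_connectedComponentIn_subset x
  rw [hc, ← integral_Ioc_eq_integral_Ioo, ← intervalIntegral.integral_of_le hlt.le,
    intervalIntegral.integral_deriv_eq_sub
      (fun t _ => (hh.differentiable one_ne_zero).differentiableAt) (hcont.intervalIntegrable _ _),
    hfr _ (hends (by simp)), hfr _ (hends (by simp)), sub_zero]

theorem setIntegral_fderiv_apply_zero_one_eq_zero {F E : Type*} [NormedAddCommGroup F]
    [NormedSpace ℝ F] [FiniteDimensional ℝ F] [MeasurableSpace F] [BorelSpace F]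
    [NormedAddCommGroup E] [NormedSpace ℝ E] [CompleteSpace E] (ν : Measure F)
    [ν.IsAddHaarMeasure] {Ω : Set (F × ℝ)} (hΩ : IsOpen Ω) (hΩb : IsBounded Ω)
    {φ : F × ℝ → E} (hφ : ContDiff ℝ 1 φ) (hfr : ∀ p ∈ frontier Ω, φ p = 0) :
    ∫ p in Ω, fderiv ℝ φ p (0, 1) ∂(ν.prod volume) = 0 := by
  have hG : Continuous fun p => fderiv ℝ φ p (0, 1) :=
    (hφ.continuous_fderiv one_ne_zero).clm_apply continuous_const
  rw [← integral_indicator hΩ.measurableSet, integral_prod _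
    ((integrable_indicator_iff hΩ.measurableSet).2 (hG.integrableOn_of_isBounded hΩb))]
  refine integral_eq_zero_of_ae (Filter.Eventually.of_forall fun y => ?_)
  have hline : Continuous fun t : ℝ => (y, t) := by fun_prop
  have hderiv (t : ℝ) : deriv (fun s => φ (y, s)) t = fderiv ℝ φ (y, t) (0, 1) :=
    (((hφ.differentiable one_ne_zero) _).hasFDerivAt.comp_hasDerivAt t
      ((hasDerivAt_const t y).prodMk (hasDerivAt_id t))).deriv
  have hU : IsOpen ((y, ·) ⁻¹' Ω) := hΩ.preimage hline
  calc ∫ t, Ω.indicator (fun p => fderiv ℝ φ p (0, 1)) (y, t)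
      = ∫ t in (y, ·) ⁻¹' Ω, deriv (fun s => φ (y, s)) t := by
        rw [← integral_indicator hU.measurableSet]
        congr 1 with t
        by_cases ht : (y, t) ∈ Ω <;> simp [indicator, ht, hderiv]
    _ = 0 := setIntegral_deriv_eq_zero_of_eqOn_frontier hU
        ((LipschitzWith.prod_snd.isBounded_image hΩb).subset fun t ht => ⟨(y, t), ht, rfl⟩)
        (hφ.comp (contDiff_const.prodMk contDiff_id))
        fun t ht => hfr _ (hline.frontier_preimage_subset Ω ht)

theorem setIntegral_fderiv_eq_zero_of_eqOn_frontier {V E : Type*} [NormedAddCommGroup V]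
    [NormedSpace ℝ V] [FiniteDimensional ℝ V] [MeasurableSpace V] [BorelSpace V]
    [NormedAddCommGroup E] [NormedSpace ℝ E] [CompleteSpace E] (μ : Measure V)
    [μ.IsAddHaarMeasure] {Ω : Set V} (hΩ : IsOpen Ω) (hΩb : IsBounded Ω) {φ : V → E}
    (hφ : ContDiff ℝ 1 φ) (hfr : ∀ x ∈ frontier Ω, φ x = 0) (v : V) :
    ∫ x in Ω, fderiv ℝ φ x v ∂μ = 0 := by
  rcases eq_or_ne v 0 with rfl | hv
  · simp
  have : Nontrivial V := nontrivial_of_ne v 0 hv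
  let F := Fin (Module.finrank ℝ V - 1) → ℝ
  obtain ⟨L, hL⟩ : ∃ L : V ≃L[ℝ] F × ℝ, L v = (0, 1) := by
    have hdim : Module.finrank ℝ V = Module.finrank ℝ (F × ℝ) := by
      simp [F, Nat.sub_add_cancel Module.finrank_pos]
    let L₀ := ContinuousLinearEquiv.ofFinrankEq hdim
    obtain ⟨M, hM⟩ := SeparatingDual.exists_continuousLinearEquiv_apply_eq (R := ℝ)
      (L₀.map_ne_zero_iff.2 hv) (by simp : ((0 : F), (1 : ℝ)) ≠ 0)
    exact ⟨L₀.trans M, hM⟩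
  let ν : Measure F := Measure.addHaar
  have hmap : μ.map L = (μ.map L).addHaarScalarFactor (ν.prod volume) • ν.prod volume :=
    Measure.isAddLeftInvariant_eq_smul _ _
  calc ∫ x in Ω, fderiv ℝ φ x v ∂μ
      = ∫ p in L.symm ⁻¹' Ω, fderiv ℝ (φ ∘ L.symm) p (0, 1) ∂(μ.map L) := by
        have hLe : MeasurableEmbedding L := L.toHomeomorph.measurableEmbedding
        rw [hLe.setIntegral_map, L.preimage_symm_preimage]
        refine setIntegral_congr_fun hΩ.measurableSet fun x _ => ?_
        rw [L.symm.comp_right_fderiv]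
        simp [← hL]
    _ = 0 := by
        rw [hmap, Measure.restrict_smul, integral_smul_nnreal_measure,
          setIntegral_fderiv_apply_zero_one_eq_zero ν (hΩ.preimage L.symm.continuous)
            (L.symm.antilipschitz.isBounded_preimage hΩb) (hφ.comp L.symm.contDiff)
            fun p hp => hfr _ (L.symm.continuous.frontier_preimage_subset Ω hp),
          smul_zero]

theorem integral_mul_le_sqrt_mul_sqrt {α : Type*} [MeasurableSpace α] {μ : Measure α}
    {f g : α → ℝ} (hf0 : 0 ≤ᵐ[μ] f) (hg0 : 0 ≤ᵐ[μ] g) (hf : MemLp f 2 μ) (hg : MemLp g 2 μ) :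
    ∫ a, f a * g a ∂μ ≤ √(∫ a, f a ^ 2 ∂μ) * √(∫ a, g a ^ 2 ∂μ) := by
  have := integral_mul_le_Lp_mul_Lq_of_nonneg Real.HolderConjugate.two_two hf0 hg0
    (by simpa using hf) (by simpa using hg)
  simpa [Real.sqrt_eq_rpow] using this

theorem Real.sqrt_le_of_le_mul_sqrt {a c : ℝ} (hc : 0 ≤ c) (h : a ≤ c * √a) : √a ≤ c := by
  rcases le_or_gt a 0 with ha | ha
  · rwa [Real.sqrt_eq_zero'.2 ha]
  have hs := Real.sqrt_pos.2 ha
  nlinarith [Real.sq_sqrt ha.le]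

theorem neg_setIntegral_mul_le_of_abs_le_mul {X : Type*} [PseudoMetricSpace X] [ProperSpace X]
    [MeasurableSpace X] [OpensMeasurableSpace X] {μ : Measure X} [IsFiniteMeasureOnCompacts μ]
    {Ω : Set X} (hΩ : MeasurableSet Ω) (hΩb : IsBounded Ω) {f g s : X → ℝ} (hf : Continuous f)
    (hg : Continuous g) (hs : Continuous s) {L : ℝ} (hL : 0 ≤ L)
    (hgs : ∀ x ∈ Ω, |g x| ≤ L * s x) :
    -∫ x in Ω, f x * g x ∂μ ≤ L * (√(∫ x in Ω, f x ^ 2 ∂μ) * √(∫ x in Ω, s x ^ 2 ∂μ)) := by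
  have hL2 {h : X → ℝ} (hh : Continuous h) : MemLp h 2 (μ.restrict Ω) :=
    (memLp_two_iff_integrable_sq hh.aestronglyMeasurable).2
      ((hh.pow 2).integrableOn_of_isBounded hΩb)
  calc -∫ x in Ω, f x * g x ∂μ
      ≤ ∫ x in Ω, |f x * g x| ∂μ := (neg_le_abs _).trans abs_integral_le_integral_abs
    _ = ∫ x in Ω, |f x| * |g x| ∂μ := by simp only [abs_mul]
    _ ≤ ∫ x in Ω, L * (|f x| * |s x|) ∂μ := by
        refine setIntegral_mono_on ((hf.abs.mul hg.abs).integrableOn_of_isBounded hΩb)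
          ((continuous_const.mul (hf.abs.mul hs.abs)).integrableOn_of_isBounded hΩb) hΩ
          fun x hx => ?_
        rw [mul_left_comm]
        exact mul_le_mul_of_nonneg_left ((hgs x hx).trans
          (mul_le_mul_of_nonneg_left (le_abs_self _) hL)) (abs_nonneg _)
    _ ≤ L * (√(∫ x in Ω, |f x| ^ 2 ∂μ) * √(∫ x in Ω, |s x| ^ 2 ∂μ)) := by
        rw [integral_const_mul]
        exact mul_le_mul_of_nonneg_left (integral_mul_le_sqrt_mul_sqrt
          (Filter.Eventually.of_forall fun _ => abs_nonneg _)
          (Filter.Eventually.of_forall fun _ => abs_nonneg _) (hL2 hf.abs) (hL2 hs.abs)) hL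
    _ = L * (√(∫ x in Ω, f x ^ 2 ∂μ) * √(∫ x in Ω, s x ^ 2 ∂μ)) := by simp only [sq_abs]

theorem ContDiff.fderiv_apply_const {V F : Type*} [NormedAddCommGroup V] [NormedSpace ℝ V]
    [NormedAddCommGroup F] [NormedSpace ℝ F] {f : V → F} {m n : WithTop ℕ∞}
    (hf : ContDiff ℝ n f) (hmn : m + 1 ≤ n) (v : V) : ContDiff ℝ m fun x => fderiv ℝ f x v :=
  (hf.fderiv_right hmn).clm_apply contDiff_const

section IntegrationByParts

variable {V : Type*} [NormedAddCommGroup V] [NormedSpace ℝ V] [FiniteDimensional ℝ V]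
  [MeasurableSpace V] [BorelSpace V] (μ : Measure V) [μ.IsAddHaarMeasure] {Ω : Set V}

theorem setIntegral_mul_fderiv_eq_neg_fderiv_mul_of_eqOn_frontier (hΩ : IsOpen Ω)
    (hΩb : IsBounded Ω) {f g : V → ℝ} (hf : ContDiff ℝ 1 f) (hg : ContDiff ℝ 1 g)
    (hfr : ∀ x ∈ frontier Ω, f x = 0) (v : V) :
    ∫ x in Ω, f x * fderiv ℝ g x v ∂μ = -∫ x in Ω, fderiv ℝ f x v * g x ∂μ := by
  have hf' := (hf.fderiv_apply_const (m := 0) (by norm_num) v).continuous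
  have hg' := (hg.fderiv_apply_const (m := 0) (by norm_num) v).continuous
  have hprod (x : V) :
      fderiv ℝ (fun y => f y * g y) x v = f x * fderiv ℝ g x v + fderiv ℝ f x v * g x := by
    rw [fderiv_fun_mul (hf.differentiable one_ne_zero x) (hg.differentiable one_ne_zero x)]
    simp [mul_comm]
  have hzero := setIntegral_fderiv_eq_zero_of_eqOn_frontier μ hΩ hΩb (hf.mul hg)
    (fun x hx => by simp [hfr x hx]) v
  simp only [hprod] at hzero
  have h₁ : IntegrableOn (fun x => f x * fderiv ℝ g x v) Ω μ :=
    (hf.continuous.mul hg').integrableOn_of_isBounded hΩb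
  have h₂ : IntegrableOn (fun x => fderiv ℝ f x v * g x) Ω μ :=
    (hf'.mul hg.continuous).integrableOn_of_isBounded hΩb
  rw [integral_add h₁ h₂] at hzero
  exact eq_neg_of_add_eq_zero_left hzero

theorem setIntegral_sum_fderiv_sq_eq_neg_mul_sum_fderiv_fderiv {ι : Type*} [Fintype ι]
    (hΩ : IsOpen Ω) (hΩb : IsBounded Ω) {w : V → ℝ} (hw : ContDiff ℝ 2 w)
    (hfr : ∀ x ∈ frontier Ω, w x = 0) (e : ι → V) :
    ∫ x in Ω, ∑ i, (fderiv ℝ w x (e i)) ^ 2 ∂μ =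
      -∫ x in Ω, w x * ∑ i, fderiv ℝ (fun y => fderiv ℝ w y (e i)) x (e i) ∂μ := by
  have hD (i : ι) : ContDiff ℝ 1 fun x => fderiv ℝ w x (e i) :=
    hw.fderiv_apply_const (by norm_num) (e i)
  have hD2 (i : ι) := ((hD i).fderiv_apply_const (m := 0) (by norm_num) (e i)).continuous
  simp_rw [Finset.mul_sum]
  have hsq (i : ι) : IntegrableOn (fun x => fderiv ℝ w x (e i) ^ 2) Ω μ :=
    ((hD i).continuous.pow 2).integrableOn_of_isBounded hΩb
  have hmul (i : ι) : IntegrableOn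
      (fun x => w x * fderiv ℝ (fun y => fderiv ℝ w y (e i)) x (e i)) Ω μ :=
    (hw.continuous.mul (hD2 i)).integrableOn_of_isBounded hΩb
  rw [integral_finsetSum _ fun i _ => hsq i, integral_finsetSum _ fun i _ => hmul i,
    ← Finset.sum_neg_distrib]
  refine Finset.sum_congr rfl fun i _ => ?_
  rw [setIntegral_mul_fderiv_eq_neg_fderiv_mul_of_eqOn_frontier μ hΩ hΩb (hw.of_le one_le_two)
    (hD i) hfr, neg_neg]
  simp [sq]

theorem setIntegral_sum_fderiv_sq_le_of_abs_sum_fderiv_fderiv_le {ι : Type*} [Fintype ι]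
    (hΩ : IsOpen Ω) (hΩb : IsBounded Ω) {w : V → ℝ} (hw : ContDiff ℝ 2 w)
    (hfr : ∀ x ∈ frontier Ω, w x = 0) (e : ι → V) {s : V → ℝ} (hs : Continuous s) {L : ℝ}
    (hL : 0 ≤ L)
    (hΔ : ∀ x ∈ Ω, |∑ i, fderiv ℝ (fun y => fderiv ℝ w y (e i)) x (e i)| ≤ L * s x) :
    ∫ x in Ω, ∑ i, (fderiv ℝ w x (e i)) ^ 2 ∂μ ≤
      L * (√(∫ x in Ω, w x ^ 2 ∂μ) * √(∫ x in Ω, s x ^ 2 ∂μ)) := by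
  have hD2 (i : ι) : ContDiff ℝ 0 fun x => fderiv ℝ (fun y => fderiv ℝ w y (e i)) x (e i) :=
    (hw.fderiv_apply_const (m := 1) (by norm_num) (e i)).fderiv_apply_const (by norm_num) (e i)
  have hΔw := continuous_finsetSum Finset.univ fun i _ => (hD2 i).continuous
  rw [setIntegral_sum_fderiv_sq_eq_neg_mul_sum_fderiv_fderiv μ hΩ hΩb hw hfr]
  exact neg_setIntegral_mul_le_of_abs_le_mul hΩ.measurableSet hΩb hw.continuous hΔw hs hL hΔ

end IntegrationByParts

theorem iteration_contraction_estimate_general (n : ℕ)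
    (Ω : Set (EuclideanSpace ℝ (Fin n))) (hΩo : IsOpen Ω)
    (hΩb : Bornology.IsBounded Ω) (κ L : ℝ) (hκ0 : 0 ≤ κ) (hL : 0 ≤ L)
    (hκ : ∀ v : EuclideanSpace ℝ (Fin n) → ℝ, ContDiff ℝ 2 v →
      (∀ x ∈ frontier Ω, v x = 0) →
      Real.sqrt (∫ x in Ω, (v x) ^ 2) ≤
        κ * Real.sqrt (∫ x in Ω, ∑ i, (fderiv ℝ v x (EuclideanSpace.single i 1)) ^ 2))
    (um u up g : EuclideanSpace ℝ (Fin n) → ℝ)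
    (hum : ContDiff ℝ 2 um) (hu : ContDiff ℝ 2 u) (hup : ContDiff ℝ 2 up)
    (hbd : ∀ x ∈ frontier Ω, u x = 0)
    (hbdp : ∀ x ∈ frontier Ω, up x = 0)
    (hlap : ∀ x ∈ Ω,
      (∑ i, fderiv ℝ (fun y => fderiv ℝ (fun z => up z - u z) y
        (EuclideanSpace.single i 1)) x (EuclideanSpace.single i 1)) = g x)
    (hg : ∀ x ∈ Ω, |g x| ≤
      L * Real.sqrt (∑ i, (fderiv ℝ u x (EuclideanSpace.single i 1)
        - fderiv ℝ um x (EuclideanSpace.single i 1)) ^ 2)) :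
    Real.sqrt (∫ x in Ω, ∑ i,
        (fderiv ℝ (fun z => up z - u z) x (EuclideanSpace.single i 1)) ^ 2) ≤
      L * κ * Real.sqrt (∫ x in Ω, ∑ i,
        (fderiv ℝ (fun z => u z - um z) x (EuclideanSpace.single i 1)) ^ 2) := by
  set w := fun z => up z - u z
  have hw : ContDiff ℝ 2 w := hup.sub hu
  have hw0 : ∀ x ∈ frontier Ω, w x = 0 := fun x hx => by simp [w, hbdp x hx, hbd x hx]
  have hgrad (x) : fderiv ℝ (fun z => u z - um z) x = fderiv ℝ u x - fderiv ℝ um x :=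
    fderiv_fun_sub (hu.differentiable two_ne_zero x) (hum.differentiable two_ne_zero x)
  set s := fun x => √(∑ i, (fderiv ℝ (fun z => u z - um z) x (EuclideanSpace.single i 1)) ^ 2)
  have hs : Continuous s := by
    have := (hu.sub hum).continuous_fderiv_apply two_ne_zero
    fun_prop
  have hs2 : ∫ x in Ω, s x ^ 2 =
      ∫ x in Ω, ∑ i, (fderiv ℝ (fun z => u z - um z) x (EuclideanSpace.single i 1)) ^ 2 :=
    integral_congr_ae (Filter.Eventually.of_forall fun x =>
      Real.sq_sqrt (Finset.sum_nonneg fun i _ => sq_nonneg _))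
  have henergy := setIntegral_sum_fderiv_sq_le_of_abs_sum_fderiv_fderiv_le volume hΩo hΩb hw hw0
    (fun i => EuclideanSpace.single i 1) hs hL fun x hx => by
      simpa [s, hlap x hx, hgrad] using hg x hx
  refine Real.sqrt_le_of_le_mul_sqrt (by positivity) ?_
  calc ∫ x in Ω, ∑ i, (fderiv ℝ w x (EuclideanSpace.single i 1)) ^ 2
      ≤ L * (√(∫ x in Ω, w x ^ 2) * √(∫ x in Ω, s x ^ 2)) := henergy
    _ ≤ L * (κ * √(∫ x in Ω, ∑ i, (fderiv ℝ w x (EuclideanSpace.single i 1)) ^ 2) *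
          √(∫ x in Ω, s x ^ 2)) := by gcongr; exact hκ w hw hw0
    _ = _ := by rw [hs2]; ring

/-- Contraction estimate: if `Δ(u_{i+1}−u_i) = g` with `|g| ≤ L|∇u_i − ∇u_{i-1}|`
pointwise, and `κ` is a Poincaré constant for `Ω`, then
`‖∇(u_{i+1}−u_i)‖_{L²} ≤ Lκ‖∇(u_i−u_{i-1})‖_{L²}`. -/
theorem iteration_contraction_estimate (n : ℕ)
    (Ω : Set (EuclideanSpace ℝ (Fin n))) (hΩo : IsOpen Ω)
    (hΩb : Bornology.IsBounded Ω) (κ L : ℝ) (hκ0 : 0 ≤ κ) (hL : 0 ≤ L)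
    (hκ : ∀ v : EuclideanSpace ℝ (Fin n) → ℝ, ContDiff ℝ 2 v →
      (∀ x ∈ frontier Ω, v x = 0) →
      Real.sqrt (∫ x in Ω, (v x) ^ 2) ≤
        κ * Real.sqrt (∫ x in Ω, ∑ i, (fderiv ℝ v x (EuclideanSpace.single i 1)) ^ 2))
    (um u up g : EuclideanSpace ℝ (Fin n) → ℝ)
    (hum : ContDiff ℝ 2 um) (hu : ContDiff ℝ 2 u) (hup : ContDiff ℝ 2 up)
    (hbdm : ∀ x ∈ frontier Ω, um x = 0) (hbd : ∀ x ∈ frontier Ω, u x = 0)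
    (hbdp : ∀ x ∈ frontier Ω, up x = 0)
    (hlap : ∀ x ∈ Ω,
      (∑ i, fderiv ℝ (fun y => fderiv ℝ (fun z => up z - u z) y
        (EuclideanSpace.single i 1)) x (EuclideanSpace.single i 1)) = g x)
    (hg : ∀ x ∈ Ω, |g x| ≤
      L * Real.sqrt (∑ i, (fderiv ℝ u x (EuclideanSpace.single i 1)
        - fderiv ℝ um x (EuclideanSpace.single i 1)) ^ 2)) :
    Real.sqrt (∫ x in Ω, ∑ i,
        (fderiv ℝ (fun z => up z - u z) x (EuclideanSpace.single i 1)) ^ 2) ≤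
      L * κ * Real.sqrt (∫ x in Ω, ∑ i,
        (fderiv ℝ (fun z => u z - um z) x (EuclideanSpace.single i 1)) ^ 2) :=
  iteration_contraction_estimate_general n Ω hΩo hΩb κ L hκ0 hL hκ um u up g hum hu hup hbd hbdp
    hlap hg
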